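/- arXiv:2212.07227 — 6 statements merged into one kernel-verified Lean document; each statement's English description precedes it below -/
import Mathlib

section
/- For endomorphisms φ₁, φ₂ of finite-dimensional vector spaces V₁, V₂ over a field with φᵢ² = c·Id for a scalar c ≠ 0, the maps φ₁⊗1 − 1⊗φ₂ and φ₁⊗1 + 1⊗φ₂ on V₁⊗V₂ satisfy: the image of each equals the kernel of the other; i.e., the 2-periodic sequence with these alternating maps is exact. -/
open TensorProduct

/-!
Put `A = φ₁ ⊗ 1` and `B = 1 ⊗ φ₂`: they commute and `A² = B² = c`. Hence
`(A + B)(A - B) = A² - B² = 0`, and conversely, if `(A + B) x = 0` then `B x = -A x`, so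
`(A - B)(A x) = A(A x - B x) = 2 A² x = 2c x`, which exhibits `x` in the range of `A - B`.
Replacing `B` by `-B` gives the other half.
-/

namespace Module.End

theorem range_sub_le_ker_add {R M : Type*} [Ring R] [AddCommGroup M] [Module R M]
    {A B : Module.End R M} (hAB : Commute A B) (hsq : A * A = B * B) :
    LinearMap.range (A - B) ≤ LinearMap.ker (A + B) :=
  LinearMap.range_le_ker_iff.mpr <| by
    change (A + B) * (A - B) = 0
    rw [← hAB.mul_self_sub_mul_self_eq, hsq, sub_self]

theorem range_sub_eq_ker_add {k W : Type*} [Field k] [AddCommGroup W] [Module k W]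
    (hk : (2 : k) ≠ 0) {c : k} (hc : c ≠ 0) {A B : Module.End k W} (hAB : Commute A B)
    (hA : A * A = c • 1) (hB : B * B = c • 1) :
    LinearMap.range (A - B) = LinearMap.ker (A + B) := by
  refine le_antisymm (range_sub_le_ker_add hAB (hA.trans hB.symm)) fun x hx => ?_
  have hBx : B x = -A x := eq_neg_of_add_eq_zero_right hx
  have hAAx : A (A x) = c • x := by simpa using congr($hA x)
  have hABAx : (A - B) (A x) = (2 * c) • x := by
    calc (A - B) (A x) = A (A x) - A (B x) := by
          rw [LinearMap.sub_apply, ← Module.End.mul_apply B, ← hAB.eq, Module.End.mul_apply]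
      _ = (2 * c) • x := by rw [hBx, map_neg, sub_neg_eq_add, hAAx, ← two_smul k, smul_smul]
  refine ⟨(2 * c)⁻¹ • A x, ?_⟩
  rw [map_smul, hABAx, smul_smul, inv_mul_cancel₀ (mul_ne_zero hk hc), one_smul]

end Module.End

theorem stmt_2_general {k V₁ V₂ : Type*} [Field k] (hk : (2 : k) ≠ 0)
    [AddCommGroup V₁] [Module k V₁]
    [AddCommGroup V₂] [Module k V₂]
    (c : k) (hc : c ≠ 0)
    (φ₁ : V₁ →ₗ[k] V₁) (φ₂ : V₂ →ₗ[k] V₂)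
    (h₁ : φ₁ ∘ₗ φ₁ = c • LinearMap.id) (h₂ : φ₂ ∘ₗ φ₂ = c • LinearMap.id) :
    LinearMap.range (TensorProduct.map φ₁ LinearMap.id - TensorProduct.map LinearMap.id φ₂) =
      LinearMap.ker (TensorProduct.map φ₁ LinearMap.id + TensorProduct.map LinearMap.id φ₂) ∧
    LinearMap.range (TensorProduct.map φ₁ LinearMap.id + TensorProduct.map LinearMap.id φ₂) =
      LinearMap.ker (TensorProduct.map φ₁ LinearMap.id - TensorProduct.map LinearMap.id φ₂) := by
  have hA : φ₁.rTensor V₂ * φ₁.rTensor V₂ = c • 1 := by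
    rw [← LinearMap.rTensor_mul, Module.End.mul_eq_comp, h₁, LinearMap.rTensor_smul,
      LinearMap.rTensor_id, Module.End.one_eq_id]
  have hB : φ₂.lTensor V₁ * φ₂.lTensor V₁ = c • 1 := by
    rw [← LinearMap.lTensor_mul, Module.End.mul_eq_comp, h₂, LinearMap.lTensor_smul,
      LinearMap.lTensor_id, Module.End.one_eq_id]
  have hAB : Commute (φ₁.rTensor V₂) (φ₂.lTensor V₁) :=
    (LinearMap.rTensor_comp_lTensor _ _ _).trans (LinearMap.lTensor_comp_rTensor _ _ _).symm
  refine ⟨Module.End.range_sub_eq_ker_add hk hc hAB hA hB, ?_⟩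
  have := Module.End.range_sub_eq_ker_add hk hc hAB.neg_right hA (by rwa [neg_mul_neg])
  rwa [sub_neg_eq_add, ← sub_eq_add_neg] at this

/-- for endomorphisms `φᵢ` of finite-dimensional vector spaces with
`φᵢ² = c·Id`, `c ≠ 0`, the 2-periodic sequence with alternating maps
`φ₁⊗1 − 1⊗φ₂` and `φ₁⊗1 + 1⊗φ₂` on `V₁ ⊗ V₂` is exact: the image of each map
equals the kernel of the other. -/
theorem stmt_2 {k V₁ V₂ : Type*} [Field k] (hk : (2 : k) ≠ 0)
    [AddCommGroup V₁] [Module k V₁] [FiniteDimensional k V₁]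
    [AddCommGroup V₂] [Module k V₂] [FiniteDimensional k V₂]
    (c : k) (hc : c ≠ 0)
    (φ₁ : V₁ →ₗ[k] V₁) (φ₂ : V₂ →ₗ[k] V₂)
    (h₁ : φ₁ ∘ₗ φ₁ = c • LinearMap.id) (h₂ : φ₂ ∘ₗ φ₂ = c • LinearMap.id) :
    LinearMap.range (TensorProduct.map φ₁ LinearMap.id - TensorProduct.map LinearMap.id φ₂) =
      LinearMap.ker (TensorProduct.map φ₁ LinearMap.id + TensorProduct.map LinearMap.id φ₂) ∧
    LinearMap.range (TensorProduct.map φ₁ LinearMap.id + TensorProduct.map LinearMap.id φ₂) =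
      LinearMap.ker (TensorProduct.map φ₁ LinearMap.id - TensorProduct.map LinearMap.id φ₂) :=
  stmt_2_general hk c hc φ₁ φ₂ h₁ h₂
end

section
/- Let f₁,…,f_{2g+2} be pairwise coprime linear forms in k[s,t] and f_I = ∏_{i∈I} f_i. For I, J ⊆ {1,…,2g+2} with |I| = |J| = g+1, J ∉ {I, I^c}, and i ∈ I∩J, the polynomial f_I is the smallest-degree homogeneous generator of the ideal (f_i) ∩ (f_I, f_{I^c}) in k[s,t]. -/
/-!
Writing an element of `(f_I, f_{I^c})` as `x f_I + y f_{I^c}`, its homogeneous components of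
degree `< g + 1` vanish and its component of degree `g + 1` is `a f_I + b f_{I^c}`, where `a`
and `b` are the constant terms of `x` and `y`.
Each `f_j` is a linear form, hence prime in the factorial ring `k[s,t]`, and `f_i` divides no
`f_j` with `j ≠ i`; so `f_i` divides `f_I` but not `f_{I^c}`, which forces `b = 0` for a
homogeneous element of degree `g + 1` lying in `(f_i)`.
-/

namespace MvPolynomial

section HomogeneousComponent

variable {σ R : Type*} [CommSemiring R] {q : MvPolynomial σ R} {n : ℕ}

lemma homogeneousComponent_add_mul_of_isHomogeneous (hq : q.IsHomogeneous n)
    (x : MvPolynomial σ R) (d : ℕ) :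
    homogeneousComponent (d + n) (x * q) = homogeneousComponent d x * q := by
  induction x using MvPolynomial.induction_on' with
  | monomial m c =>
    rw [homogeneousComponent_of_mem ((isHomogeneous_monomial c rfl).mul hq),
      homogeneousComponent_of_mem (isHomogeneous_monomial c rfl)]
    split_ifs <;> simp_all
  | add x y hx hy => rw [add_mul, map_add, hx, hy, map_add, add_mul]

lemma homogeneousComponent_mul_of_lt (hq : q.IsHomogeneous n) (x : MvPolynomial σ R) {d : ℕ}
    (hd : d < n) : homogeneousComponent d (x * q) = 0 := by
  induction x using MvPolynomial.induction_on' with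
  | monomial m c =>
    rw [homogeneousComponent_of_mem ((isHomogeneous_monomial c rfl).mul hq), if_neg (by omega)]
  | add x y hx hy => rw [add_mul, map_add, hx, hy, add_zero]

variable {P Q p : MvPolynomial σ R}

lemma le_of_isHomogeneous_of_mem_span_pair (hP : P.IsHomogeneous n) (hQ : Q.IsHomogeneous n)
    (hp : p ∈ Ideal.span {P, Q}) (hp0 : p ≠ 0) {d : ℕ} (hpd : p.IsHomogeneous d) :
    n ≤ d := by
  by_contra! hdn
  obtain ⟨x, y, rfl⟩ := Ideal.mem_span_pair.mp hp
  apply hp0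
  rw [← homogeneousComponent_eq_self hpd, map_add, homogeneousComponent_mul_of_lt hP x hdn,
    homogeneousComponent_mul_of_lt hQ y hdn, add_zero]

lemma exists_eq_C_mul_add_C_mul_of_mem_span_pair (hP : P.IsHomogeneous n)
    (hQ : Q.IsHomogeneous n) (hp : p ∈ Ideal.span {P, Q}) (hpn : p.IsHomogeneous n) :
    ∃ a b : R, p = C a * P + C b * Q := by
  obtain ⟨x, y, rfl⟩ := Ideal.mem_span_pair.mp hp
  refine ⟨coeff 0 x, coeff 0 y, ?_⟩
  rw [← homogeneousComponent_eq_self hpn, map_add, ← zero_add n,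
    homogeneousComponent_add_mul_of_isHomogeneous hP,
    homogeneousComponent_add_mul_of_isHomogeneous hQ,
    homogeneousComponent_zero, homogeneousComponent_zero]

end HomogeneousComponent

section LinearForm

variable {σ k : Type*} [Field k] {f h : MvPolynomial σ k}

lemma irreducible_of_isHomogeneous_one (hf : f.IsHomogeneous 1) (hf0 : f ≠ 0) :
    Irreducible f := by
  refine irreducible_of_totalDegree_eq_one (hf.totalDegree hf0) fun c hc => ?_
  refine isUnit_iff_ne_zero.mpr fun hc0 => hf0 (MvPolynomial.ext _ _ fun m => ?_)
  simpa [hc0] using hc m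

lemma exists_eq_smul_of_dvd_of_isHomogeneous_one (hf : f.IsHomogeneous 1) (hf0 : f ≠ 0)
    (hh : h.IsHomogeneous 1) (hdvd : f ∣ h) : ∃ c : k, h = c • f := by
  obtain ⟨r, rfl⟩ := hdvd
  obtain rfl | hr0 := eq_or_ne r 0
  · exact ⟨0, by simp⟩
  have hr : r.totalDegree = 0 := by
    have := hh.totalDegree (mul_ne_zero hf0 hr0)
    rw [totalDegree_mul_of_isDomain hf0 hr0, hf.totalDegree hf0] at this
    omega
  refine ⟨coeff 0 r, ?_⟩
  rw [smul_eq_C_mul, mul_comm, ← totalDegree_eq_zero_iff_eq_C.mp hr]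

end LinearForm

lemma exists_eq_smul_of_mem_span_singleton_inf_span_pair {σ k : Type*} [Field k]
    {π P Q p : MvPolynomial σ k} {n : ℕ} (hπP : π ∣ P) (hπQ : ¬π ∣ Q)
    (hP : P.IsHomogeneous n) (hQ : Q.IsHomogeneous n)
    (hp : p ∈ Ideal.span {π} ⊓ Ideal.span {P, Q}) (hpn : p.IsHomogeneous n) :
    ∃ c : k, p = c • P := by
  obtain ⟨hπp, hpPQ⟩ := Ideal.mem_inf.mp hp
  obtain ⟨a, b, rfl⟩ := exists_eq_C_mul_add_C_mul_of_mem_span_pair hP hQ hpPQ hpn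
  obtain rfl | hb := eq_or_ne b 0
  · exact ⟨a, by rw [map_zero, zero_mul, add_zero, smul_eq_C_mul]⟩
  have hπbQ : π ∣ C b * Q :=
    (dvd_add_right (dvd_mul_of_dvd_right hπP _)).mp (Ideal.mem_span_singleton.mp hπp)
  exact absurd ((hb.isUnit.map C).dvd_mul_left.mp hπbQ) hπQ

end MvPolynomial

open MvPolynomial

theorem stmt_5_general {k : Type*} [Field k] (g : ℕ)
    (f : Fin (2 * g + 2) → MvPolynomial (Fin 2) k)
    (hlin : ∀ i, (f i).IsHomogeneous 1) (hne : ∀ i, f i ≠ 0)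
    (hcop : ∀ i j, i ≠ j → ∀ c : k, f j ≠ c • f i)
    (I J : Finset (Fin (2 * g + 2))) (hI : I.card = g + 1)
    (i : Fin (2 * g + 2)) (hi : i ∈ I ∩ J) :
    (∏ j ∈ I, f j) ∈
      Ideal.span {f i} ⊓ Ideal.span ({∏ j ∈ I, f j, ∏ j ∈ Iᶜ, f j} : Set (MvPolynomial (Fin 2) k)) ∧
    (∀ p ∈ Ideal.span {f i} ⊓
        Ideal.span ({∏ j ∈ I, f j, ∏ j ∈ Iᶜ, f j} : Set (MvPolynomial (Fin 2) k)),
      p ≠ 0 → ∀ d, MvPolynomial.IsHomogeneous p d → g + 1 ≤ d) ∧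
    (∀ p ∈ Ideal.span {f i} ⊓
        Ideal.span ({∏ j ∈ I, f j, ∏ j ∈ Iᶜ, f j} : Set (MvPolynomial (Fin 2) k)),
      MvPolynomial.IsHomogeneous p (g + 1) → ∃ c : k, p = c • (∏ j ∈ I, f j)) := by
  have hiI : i ∈ I := (Finset.mem_inter.mp hi).1
  have hIc : Iᶜ.card = g + 1 := by rw [Finset.card_compl, Fintype.card_fin, hI]; omega
  have hP : (∏ j ∈ I, f j).IsHomogeneous (g + 1) := by
    simpa [hI] using IsHomogeneous.prod I f (fun _ => 1) fun j _ => hlin j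
  have hQ : (∏ j ∈ Iᶜ, f j).IsHomogeneous (g + 1) := by
    simpa [hIc] using IsHomogeneous.prod Iᶜ f (fun _ => 1) fun j _ => hlin j
  have hfiP : f i ∣ ∏ j ∈ I, f j := Finset.dvd_prod_of_mem f hiI
  have hfiQ : ¬f i ∣ ∏ j ∈ Iᶜ, f j := by
    rw [(irreducible_of_isHomogeneous_one (hlin i) (hne i)).prime.dvd_finsetProd_iff]
    rintro ⟨j, hj, hdvd⟩
    obtain ⟨c, hc⟩ := exists_eq_smul_of_dvd_of_isHomogeneous_one (hlin i) (hne i) (hlin j) hdvd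
    exact hcop i j (by rintro rfl; exact Finset.mem_compl.mp hj hiI) c hc
  refine ⟨Ideal.mem_inf.mpr ⟨Ideal.mem_span_singleton.mpr hfiP, Ideal.subset_span (by simp)⟩,
    fun p hp hp0 d hpd => ?_, fun p hp hpd => ?_⟩
  · exact le_of_isHomogeneous_of_mem_span_pair hP hQ (Ideal.mem_inf.mp hp).2 hp0 hpd
  · exact exists_eq_smul_of_mem_span_singleton_inf_span_pair hfiP hfiQ hP hQ hp hpd

/-- for pairwise coprime linear forms `f₁,…,f_{2g+2}`, subsets `I, J` with
`|I| = |J| = g+1`, `J ∉ {I, I^c}`, and `i ∈ I ∩ J`, the polynomial `f_I` is the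
smallest-degree homogeneous generator of `(f_i) ∩ (f_I, f_{I^c})`: it lies in that ideal,
every nonzero homogeneous element of the ideal has degree ≥ g+1, and every homogeneous
element of degree g+1 is a scalar multiple of `f_I`. -/
theorem stmt_5 {k : Type*} [Field k] [IsAlgClosed k] (g : ℕ)
    (f : Fin (2 * g + 2) → MvPolynomial (Fin 2) k)
    (hlin : ∀ i, (f i).IsHomogeneous 1) (hne : ∀ i, f i ≠ 0)
    (hcop : ∀ i j, i ≠ j → ∀ c : k, f j ≠ c • f i)
    (I J : Finset (Fin (2 * g + 2))) (hI : I.card = g + 1) (hJ : J.card = g + 1)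
    (hJne : J ≠ I) (hJnec : J ≠ Iᶜ) (i : Fin (2 * g + 2)) (hi : i ∈ I ∩ J) :
    (∏ j ∈ I, f j) ∈
      Ideal.span {f i} ⊓ Ideal.span ({∏ j ∈ I, f j, ∏ j ∈ Iᶜ, f j} : Set (MvPolynomial (Fin 2) k)) ∧
    (∀ p ∈ Ideal.span {f i} ⊓
        Ideal.span ({∏ j ∈ I, f j, ∏ j ∈ Iᶜ, f j} : Set (MvPolynomial (Fin 2) k)),
      p ≠ 0 → ∀ d, MvPolynomial.IsHomogeneous p d → g + 1 ≤ d) ∧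
    (∀ p ∈ Ideal.span {f i} ⊓
        Ideal.span ({∏ j ∈ I, f j, ∏ j ∈ Iᶜ, f j} : Set (MvPolynomial (Fin 2) k)),
      MvPolynomial.IsHomogeneous p (g + 1) → ∃ c : k, p = c • (∏ j ∈ I, f j)) :=
  stmt_5_general g f hlin hne hcop I J hI i hi
end

section
/- Let ι: E → E be the hyperelliptic involution, and let vector bundle B on ℙ¹ with map φ: B → B(g+1), φ² = f, define the bundle L on E. Then the bundle defined by −φ is ι*L. -/
/-!
The hyperelliptic involution is induced by `p(y) ↦ p(-y)` on `k[s,t][y]`, which fixes `y² - f`.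
Applied entrywise to the presentation matrix `y + φ` of `coker(y + φ)` it gives
`-y + φ = -(y - φ)`, whose image is that of `y - φ`; so applying the involution coordinatewise
descends to an involution-semilinear isomorphism `coker(y + φ) ≅ coker(y - φ)`.
-/
set_option synthInstance.maxHeartbeats 1000000
set_option maxHeartbeats 1000000

noncomputable section
open Polynomial

/-- The coordinate ring `R_E = k[s,t][y]/(y² − f)` of the hyperelliptic curve `E`. -/
abbrev hyperellRing {k : Type*} [Field k] (f : MvPolynomial (Fin 2) k) :=
  Polynomial (MvPolynomial (Fin 2) k) ⧸
    Ideal.span {(X : Polynomial (MvPolynomial (Fin 2) k)) ^ 2 - C f}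

/-- The `R_E`-module `coker(y·Id − ψ)`, i.e. the module of the bundle `L` defined by the
matrix factorization `ψ`. -/
abbrev cokerYminus {k : Type*} [Field k] (f : MvPolynomial (Fin 2) k) {m : ℕ}
    (ψ : Matrix (Fin m) (Fin m) (MvPolynomial (Fin 2) k)) :=
  (Fin m → hyperellRing f) ⧸
    (LinearMap.range (Matrix.toLin'
      ((Ideal.Quotient.mk _ (X : Polynomial (MvPolynomial (Fin 2) k)) : hyperellRing f) •
          (1 : Matrix (Fin m) (Fin m) (hyperellRing f)) -
        ψ.map fun a => (Ideal.Quotient.mk _ (C a : Polynomial (MvPolynomial (Fin 2) k))))) :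
      Submodule (hyperellRing f) (Fin m → hyperellRing f))

section
variable {R S : Type*} [Semiring R] [Semiring S] (σ : R ≃+* S)
  [RingHomInvPair (σ : R →+* S) (σ.symm : S →+* R)] [RingHomInvPair (σ.symm : S →+* R) (σ : R →+* S)]

def RingEquiv.piSemilinearEquiv (ι : Type*) :
    (ι → R) ≃ₛₗ[(σ : R →+* S)] (ι → S) :=
  { RingEquiv.piCongrRight fun _ : ι => σ with
    map_smul' := fun r v => funext fun i => map_mul σ r (v i) }

@[simp] lemma RingEquiv.piSemilinearEquiv_apply {ι : Type*} (v : ι → R) (i : ι) :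
    σ.piSemilinearEquiv ι v i = σ (v i) := rfl

end

section
variable {R S : Type*} [CommSemiring R] [CommSemiring S] (σ : R ≃+* S)
  [RingHomInvPair (σ : R →+* S) (σ.symm : S →+* R)] [RingHomInvPair (σ.symm : S →+* R) (σ : R →+* S)]

theorem Matrix.map_range_toLin' {m n : Type*} [Fintype n] [DecidableEq n] (M : Matrix m n R) :
    (LinearMap.range M.toLin').map (σ.piSemilinearEquiv m : (m → R) →ₛₗ[(σ : R →+* S)] (m → S)) =
      LinearMap.range (M.map σ).toLin' := by
  ext w
  simp only [Submodule.mem_map, LinearMap.mem_range, Matrix.toLin'_apply]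
  constructor
  · rintro ⟨_, ⟨v, rfl⟩, rfl⟩
    exact ⟨σ ∘ v, funext fun i => ((σ : R →+* S).map_mulVec M v i).symm⟩
  · rintro ⟨v, rfl⟩
    refine ⟨_, ⟨σ.symm ∘ v, rfl⟩, funext fun i => ?_⟩
    simpa [Function.comp_def] using (σ : R →+* S).map_mulVec M (σ.symm ∘ v) i

end

section
variable {R S : Type*} [CommRing R] [CommRing S] (σ : R ≃+* S)
  [RingHomInvPair (σ : R →+* S) (σ.symm : S →+* R)] [RingHomInvPair (σ.symm : S →+* R) (σ : R →+* S)]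

def Matrix.cokernelSemilinearEquiv {m n : Type*} [Fintype n] [DecidableEq n] (M : Matrix m n R) :
    ((m → R) ⧸ LinearMap.range M.toLin') ≃ₛₗ[(σ : R →+* S)]
      (m → S) ⧸ LinearMap.range (M.map σ).toLin' :=
  Submodule.Quotient.equiv _ _ (σ.piSemilinearEquiv m) (M.map_range_toLin' σ)

end

theorem Matrix.range_toLin'_neg {R m n : Type*} [CommRing R] [Fintype n] [DecidableEq n]
    (M : Matrix m n R) :
    LinearMap.range (-M).toLin' = LinearMap.range M.toLin' := by
  rw [map_neg, LinearMap.range_neg]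

namespace Polynomial
variable {R : Type*} [CommRing R]

def negXQuotientEquiv (a : R) :
    (R[X] ⧸ Ideal.span {X ^ 2 - C a}) ≃+* R[X] ⧸ Ideal.span {X ^ 2 - C a} :=
  Ideal.quotientEquiv _ _ algEquivAevalNegX.toRingEquiv <| by
    simp [Ideal.map_span]

@[simp] theorem negXQuotientEquiv_mk_X (a : R) :
    negXQuotientEquiv a (Ideal.Quotient.mk _ X) = -Ideal.Quotient.mk _ X := by
  simp [negXQuotientEquiv]

@[simp] theorem negXQuotientEquiv_mk_C (a b : R) :
    negXQuotientEquiv a (Ideal.Quotient.mk _ (C b)) = Ideal.Quotient.mk _ (C b) := by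
  simp [negXQuotientEquiv]

theorem negXQuotientEquiv_map_X_smul_one_sub {n : Type*} [DecidableEq n] (a : R)
    (φ : Matrix n n R) :
    (Ideal.Quotient.mk (Ideal.span {X ^ 2 - C a}) X • 1 -
        (-φ).map fun b => Ideal.Quotient.mk _ (C b)).map (negXQuotientEquiv a) =
      -(Ideal.Quotient.mk (Ideal.span {X ^ 2 - C a}) X • 1 -
        φ.map fun b => Ideal.Quotient.mk _ (C b)) := by
  ext i j
  by_cases h : i = j <;> simp [h, sub_eq_neg_add, add_comm]

end Polynomial

theorem stmt_12_general {k : Type*} [Field k] (m : ℕ) (f : MvPolynomial (Fin 2) k)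
    (φ : Matrix (Fin m) (Fin m) (MvPolynomial (Fin 2) k)) :
    ∃ σ : hyperellRing f ≃+* hyperellRing f,
      σ (Ideal.Quotient.mk _ (X : Polynomial (MvPolynomial (Fin 2) k))) =
        -(Ideal.Quotient.mk _ (X : Polynomial (MvPolynomial (Fin 2) k))) ∧
      (∀ a : MvPolynomial (Fin 2) k,
        σ (Ideal.Quotient.mk _ (C a : Polynomial (MvPolynomial (Fin 2) k))) =
          Ideal.Quotient.mk _ (C a : Polynomial (MvPolynomial (Fin 2) k))) ∧
      ∃ ψ : cokerYminus f (-φ) ≃+ cokerYminus f φ,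
        ∀ (r : hyperellRing f) (x : cokerYminus f (-φ)), ψ (r • x) = σ r • ψ x := by
  have := RingHomInvPair.of_ringEquiv (negXQuotientEquiv f)
  have := RingHomInvPair.of_ringEquiv_symm (negXQuotientEquiv f)
  let ψ : cokerYminus f (-φ) ≃ₛₗ[(negXQuotientEquiv f : hyperellRing f →+* hyperellRing f)]
      cokerYminus f φ :=
    (Matrix.cokernelSemilinearEquiv (R := hyperellRing f) (S := hyperellRing f) _ _).trans
      (Submodule.quotEquivOfEq _ _ <| by
        rw [negXQuotientEquiv_map_X_smul_one_sub, Matrix.range_toLin'_neg])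
  exact ⟨negXQuotientEquiv f, negXQuotientEquiv_mk_X f, negXQuotientEquiv_mk_C f,
    ψ.toAddEquiv, ψ.map_smulₛₗ⟩

/-- if the matrix factorization `φ` (with `φ² = f·Id`) defines the bundle
`L = coker(y−φ)` on `E`, then the bundle defined by `−φ` is `ι*L`, where `ι : E → E`
is the hyperelliptic involution `y ↦ −y`.  Algebraically: there is a ring automorphism
`σ` of `R_E` fixing `k[s,t]` and sending `y` to `−y`, and a `σ`-semilinear isomorphism
`coker(y+φ) ≅ coker(y−φ)`. -/
theorem stmt_12 {k : Type*} [Field k] (g m : ℕ) (f : MvPolynomial (Fin 2) k)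
    (hf : f.IsHomogeneous (2 * g + 2)) (hsf : Squarefree f)
    (φ : Matrix (Fin m) (Fin m) (MvPolynomial (Fin 2) k))
    (hφ : φ * φ = f • (1 : Matrix (Fin m) (Fin m) (MvPolynomial (Fin 2) k))) :
    ∃ σ : hyperellRing f ≃+* hyperellRing f,
      σ (Ideal.Quotient.mk _ (X : Polynomial (MvPolynomial (Fin 2) k))) =
        -(Ideal.Quotient.mk _ (X : Polynomial (MvPolynomial (Fin 2) k))) ∧
      (∀ a : MvPolynomial (Fin 2) k,
        σ (Ideal.Quotient.mk _ (C a : Polynomial (MvPolynomial (Fin 2) k))) =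
          Ideal.Quotient.mk _ (C a : Polynomial (MvPolynomial (Fin 2) k))) ∧
      ∃ ψ : cokerYminus f (-φ) ≃+ cokerYminus f φ,
        ∀ (r : hyperellRing f) (x : cokerYminus f (-φ)), ψ (r • x) = σ r • ψ x :=
  stmt_12_general m f φ
end
end

section
/- Let X ⊂ ℙ^{2g+1} be a smooth complete intersection of two quadrics with associated hyperelliptic curve E of genus g, and F_U the Morita bundle of rank 2^g and degree g·2^{g−1} on E. For a vector bundle G on E of rank r and degree d, χ(G ⊗ F_U) = d·2^g + r·g·2^{g−1} + r·2^g(1−g). Consequently, if χ(G⊗F_U) = 0 then r·g ≡ 0 (mod 2); in particular, Ulrich bundles of rank r·2^{g−2} on X do not exist when r·g is odd. -/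
/-! Riemann–Roch gives `χ(G ⊗ F_U) = 2^(g-1) · (2(d - r(g-1)) + r g)`, and the power of two is a
nonzero factor, so `χ = 0` forces `r g = 2(r(g-1) - d)` to be even. -/

lemma eulerChar_twist_eq (m : ℕ) (r d : ℤ) :
    d * 2 ^ (m + 1) + r * ((m + 1 : ℕ) : ℤ) * 2 ^ m + r * 2 ^ (m + 1) * (1 - ((m + 1 : ℕ) : ℤ)) =
      2 ^ m * (2 * (d - r * m) + r * (m + 1)) := by
  push_cast
  ring

theorem stmt_13_general (g : ℕ) (r d : ℤ)
    (hchi : d * 2 ^ g + r * (g : ℤ) * 2 ^ (g - 1) + r * 2 ^ g * (1 - (g : ℤ)) = 0) :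
    2 ∣ r * (g : ℤ) := by
  obtain _ | m := g
  · simp
  rw [Nat.add_sub_cancel, eulerChar_twist_eq] at hchi
  have hbracket : 2 * (d - r * m) + r * (m + 1) = 0 :=
    (mul_eq_zero.mp hchi).resolve_left (by positivity)
  exact ⟨r * m - d, by push_cast; linear_combination hbracket⟩

/-- for a vector bundle `G` of rank `r` and degree `d` on the
hyperelliptic curve `E` of genus `g`, by Riemann–Roch
`χ(G ⊗ F_U) = deg(G ⊗ F_U) + rank(G ⊗ F_U)·(1−g)
           = d·2^g + r·g·2^(g−1) + r·2^g·(1−g)`.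
If this Euler characteristic vanishes (as it does for the bundle corresponding to
an Ulrich bundle of rank `r·2^(g−2)`), then `r·g` is even; hence Ulrich bundles of
rank `r·2^(g−2)` do not exist when `r·g` is odd. -/
theorem stmt_13 (g : ℕ) (hg : 1 ≤ g) (r d : ℤ)
    (hchi : d * 2 ^ g + r * (g : ℤ) * 2 ^ (g - 1) + r * 2 ^ g * (1 - (g : ℤ)) = 0) :
    2 ∣ r * (g : ℤ) :=
  stmt_13_general g r d hchi
end

section
/- Let F_U = ⊕ᵢ (Λ^{2i}U^⊥)* ⊗ T(−i) over T = k[s,t] for a g-dimensional isotropic subspace U of a (2g+2)-dimensional space. The corresponding bundle F_U on the hyperelliptic curve E has rank 2^g, its pushforward to ℙ¹ has degree −Σ_{i≥0} i·binom(g+2,2i) = −(g+2)·2^{g−1}, and therefore deg F_U = (g+1)·2^g − (g+2)·2^{g−1} = g·2^{g−1}. -/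
/-!
By Pascal's rule `C(n+1, k+1) = C(n, k) + C(n, k+1)`, the coefficients of row `n + 1` taken at
every other index add up to a full row sum of row `n`, namely `2 ^ n`. The weighted sum reduces
to such an odd-index sum through `2i · C(n+2, 2i) = (n+2) · C(n+1, 2i-1)`.
-/

open Finset

theorem Finset.sum_range_two_mul {M : Type*} [AddCommMonoid M] (f : ℕ → M) (m : ℕ) :
    ∑ k ∈ range (2 * m), f k = ∑ i ∈ range m, (f (2 * i) + f (2 * i + 1)) := by
  induction m with
  | zero => simp
  | succ m ih => rw [mul_add_one, sum_range_succ, sum_range_succ, sum_range_succ, ih, add_assoc]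

namespace Nat

theorem sum_range_choose_of_le {n N : ℕ} (h : n + 1 ≤ N) :
    ∑ k ∈ range N, n.choose k = 2 ^ n := by
  rw [← sum_range_choose n]
  refine (sum_subset (range_subset_range.2 h) fun k _ hk => ?_).symm
  exact choose_eq_zero_of_lt (by simpa using hk)

theorem sum_range_choose_succ_two_mul_add_one {n m : ℕ} (h : n + 1 ≤ 2 * m) :
    ∑ i ∈ range m, (n + 1).choose (2 * i + 1) = 2 ^ n := by
  simp only [choose_succ_succ']
  rw [← sum_range_two_mul (n.choose ·), sum_range_choose_of_le h]

theorem sum_range_choose_succ_two_mul {n m : ℕ} (h : n ≤ 2 * m) :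
    ∑ i ∈ range (m + 1), (n + 1).choose (2 * i) = 2 ^ n :=
  calc ∑ i ∈ range (m + 1), (n + 1).choose (2 * i)
      = ∑ i ∈ range m, (n.choose (2 * i + 1) + n.choose (2 * i + 1 + 1)) + n.choose 0 := by
        simp only [sum_range_succ', mul_add_one, choose_succ_succ', choose_zero_right, mul_zero]
    _ = ∑ k ∈ range (2 * m + 1), n.choose k := by
        rw [sum_range_succ' _ (2 * m), sum_range_two_mul]
    _ = 2 ^ n := sum_range_choose_of_le (by omega)

theorem two_mul_sum_range_mul_choose_two_mul {n m : ℕ} (h : n + 1 ≤ 2 * m) :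
    2 * ∑ i ∈ range (m + 1), i * (n + 2).choose (2 * i) = (n + 2) * 2 ^ n := by
  rw [sum_range_succ', zero_mul, add_zero, mul_sum,
    ← sum_range_choose_succ_two_mul_add_one h, mul_sum]
  refine sum_congr rfl fun i _ => ?_
  rw [mul_add_one 2 i]
  linarith [add_one_mul_choose_eq (n + 1) (2 * i + 1)]

end Nat

/-- the Morita bundle `F_U = ⊕ᵢ (Λ^{2i}U^⊥)* ⊗ T(−i)` has rank
`(Σᵢ binom(g+2,2i))/2 = 2^(g+1)/2 = 2^g` on `E`, its pushforward to `ℙ¹` has degree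
`−Σᵢ i·binom(g+2,2i) = −(g+2)·2^(g−1)`, and hence
`deg F_U = (g+1)·2^g − (g+2)·2^(g−1) = g·2^(g−1)`. -/
theorem stmt_14 (g : ℕ) (hg : 1 ≤ g) :
    (∑ i ∈ Finset.range (g + 3), Nat.choose (g + 2) (2 * i)) = 2 ^ (g + 1) ∧
    (∑ i ∈ Finset.range (g + 3), (i : ℤ) * Nat.choose (g + 2) (2 * i)) =
      ((g : ℤ) + 2) * 2 ^ (g - 1) ∧
    ((g : ℤ) + 1) * 2 ^ g - ((g : ℤ) + 2) * 2 ^ (g - 1) = (g : ℤ) * 2 ^ (g - 1) := by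
  obtain ⟨k, rfl⟩ : ∃ k, g = k + 1 := ⟨g - 1, by omega⟩
  have hweighted : 2 * ∑ i ∈ range (k + 4), i * (k + 3).choose (2 * i) = (k + 3) * 2 ^ (k + 1) :=
    Nat.two_mul_sum_range_mul_choose_two_mul (by omega)
  refine ⟨Nat.sum_range_choose_succ_two_mul (by omega), ?_, ?_⟩
  · simp only [add_tsub_cancel_right]
    have := congrArg (Nat.cast : ℕ → ℤ) hweighted
    push_cast at this ⊢
    rw [pow_succ] at this
    linarith
  · simp only [add_tsub_cancel_right]
    ring
end

section
/- Let a₀,…,a_n be distinct elements of a field k, and let E = (e_{i,k}) be the (n+1)×(n+1) matrix whose i-th row consists of the elementary symmetric polynomials e_k evaluated on {a₀,…,a_n}∖{aᵢ} (k = 0,…,n). Then det E = ∏_{0 ≤ i < j ≤ n} (aᵢ − a_j); in particular E is invertible when the aᵢ are distinct. -/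
/-!
Row `i` of `E` lists the coefficients of `∏_{m ≠ i} (X + a_m)`, so pairing it with the column
`((-1)^k a_l^(n-k))_k` gives `∏_{m ≠ i} (a_l - a_m)`, which vanishes unless `l = i`. Hence `E`
times this signed Vandermonde matrix, whose determinant is `V = ∏_{i<j} (a_j - a_i)`, is diagonal
with determinant `∏_i ∏_{m ≠ i} (a_i - a_m) = ∏_{i<j} (a_i - a_j) · V`, and `V ≠ 0` cancels.
-/

open Finset Matrix

theorem Finset.prod_sub_eq_sum_range_powersetCard {ι R : Type*} [CommRing R] [DecidableEq ι]
    (s : Finset ι) (a : ι → R) (x : R) :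
    ∏ m ∈ s, (x - a m) =
      ∑ j ∈ range (#s + 1), (-1) ^ j * (∑ t ∈ s.powersetCard j, ∏ m ∈ t, a m) * x ^ (#s - j) := by
  rw [prod_sub, sum_powerset]
  refine sum_congr rfl fun j _ => ?_
  rw [mul_sum, sum_mul]
  refine sum_congr rfl fun t ht => ?_
  obtain ⟨hts, rfl⟩ := mem_powersetCard.mp ht
  rw [prod_const, card_sdiff_of_subset hts]
  ring

theorem Finset.prod_filter_lt_eq_prod_prod_Ioi {α M : Type*} [Fintype α] [LinearOrder α]
    [LocallyFiniteOrderTop α] [CommMonoid M] (f : α → α → M) :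
    ∏ p ∈ univ.filter (fun p : α × α => p.1 < p.2), f p.1 p.2 = ∏ i, ∏ j ∈ Ioi i, f i j := by
  rw [prod_filter, Fintype.prod_prod_type]
  simp_rw [← prod_filter]
  congr! 2 with i
  ext j
  simp

section

variable {R : Type*} [CommRing R] {n : ℕ}

/-- The matrix `E` of the statement. -/
def esymmComplMatrix (a : Fin n → R) : Matrix (Fin n) (Fin n) R :=
  .of fun i j => ∑ t ∈ (univ.erase i).powersetCard j, ∏ m ∈ t, a m

theorem esymmComplMatrix_mul_projVandermonde_transpose (a : Fin n → R) :
    esymmComplMatrix a * (projVandermonde (fun _ => -1) a)ᵀ =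
      diagonal fun i => ∏ m ∈ univ.erase i, (a i - a m) := by
  ext i l
  obtain ⟨n, rfl⟩ : ∃ n', n = n' + 1 := Nat.exists_eq_add_one_of_ne_zero i.pos.ne'
  have hcard : #(univ.erase i) = n := by simp
  have hrow : (esymmComplMatrix a * (projVandermonde (fun _ => -1) a)ᵀ) i l =
      ∏ m ∈ univ.erase i, (a l - a m) := by
    rw [prod_sub_eq_sum_range_powersetCard, hcard, ← Fin.sum_univ_eq_sum_range, mul_apply]
    refine sum_congr rfl fun j _ => ?_
    rw [esymmComplMatrix, of_apply, transpose_apply, projVandermonde_apply, Fin.val_rev,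
      Nat.add_sub_add_right]
    ring
  rw [hrow, diagonal_apply]
  split_ifs with hil
  · rw [hil]
  · exact prod_eq_zero (mem_erase.mpr ⟨Ne.symm hil, mem_univ l⟩) (sub_self _)

theorem det_projVandermonde_neg_one (a : Fin n → R) :
    (projVandermonde (fun _ => -1) a).det = (vandermonde a).det := by
  simp only [det_projVandermonde, det_vandermonde]
  congr! 2 with i _ j _
  ring

theorem prod_prod_erase_sub_eq_mul_det_vandermonde (a : Fin n → R) :
    ∏ i, ∏ m ∈ univ.erase i, (a i - a m) =
      (∏ i, ∏ j ∈ Ioi i, (a i - a j)) * (vandermonde a).det := by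
  rw [det_vandermonde, ← prod_mul_distrib]
  simp_rw [← prod_mul_distrib, ← compl_singleton]
  exact (prod_prod_Ioi_mul_eq_prod_prod_off_diag fun m i => a i - a m).symm

theorem det_esymmComplMatrix [IsDomain R] {a : Fin n → R} (ha : Function.Injective a) :
    (esymmComplMatrix a).det = ∏ i, ∏ j ∈ Ioi i, (a i - a j) := by
  have hV : (vandermonde a).det ≠ 0 := det_vandermonde_ne_zero_iff.mpr ha
  refine mul_right_cancel₀ hV ?_
  rw [← prod_prod_erase_sub_eq_mul_det_vandermonde, ← det_projVandermonde_neg_one,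
    ← det_transpose (projVandermonde _ _), ← det_mul,
    esymmComplMatrix_mul_projVandermonde_transpose, det_diagonal]

end

/-- for distinct `a₀,…,a_n`, the matrix `E` whose `i`-th row consists of the
elementary symmetric polynomials `e_k` of `{a₀,…,a_n} ∖ {aᵢ}` (for `k = 0,…,n`) has
determinant `∏_{i<j} (aᵢ − a_j)`; in particular `E` is invertible. -/
theorem stmt_19 {k : Type*} [Field k] (n : ℕ) (a : Fin (n + 1) → k)
    (ha : Function.Injective a) :
    Matrix.det (Matrix.of fun i j : Fin (n + 1) =>
        ∑ t ∈ (Finset.univ.erase i).powersetCard (j : ℕ), ∏ m ∈ t, a m) =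
      ∏ p ∈ Finset.univ.filter (fun p : Fin (n + 1) × Fin (n + 1) => p.1 < p.2),
        (a p.1 - a p.2) := by
  rw [prod_filter_lt_eq_prod_prod_Ioi fun i j => a i - a j]
  exact det_esymmComplMatrix ha
end
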